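/- Let n be an odd positive integer with n ≥ 3. If x, y ∈ ℝ satisfy H_{n−1}(x) = 0, H_{n−1}(y) = 0 and H_n(x) = H_n(y), then x = y. Consequently, every critical zero of Ψ_n(x,y) = H_n(x) − H_n(y) lies on the diagonal {(x,x) : x ∈ ℝ}. -/

import Mathlib

/-!
By the Hermite equation `H_n'' = 2x H_n' - 2n H_n`, the energy `Q_n = 2n H_n² + H_n'²` has
`Q_n' = 4x H_n'²`, so `Q_n` is even and (for `n ≥ 1`) strictly increasing on `[0, ∞)`.
At a zero of `H_{n-1}` we have `H_n' = 2n H_{n-1} = 0`, so `Q_n = 2n H_n²` there. Hence for zeros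
`x, y` of `H_{n-1}`, `H_n(x) = H_n(y)` forces `|x| = |y|`; and `x = -y ≠ y` is impossible for odd
`n`, since then `H_n(x) = -H_n(y) = -H_n(x)` would be a common zero of `H_{n-1}` and `H_n`.
A critical zero `(x, y)` of `Ψ_n` has `H_n'(x) = H_n'(y) = 0`, which is the first case.
-/

open Polynomial Real Set

/-- Physicists' Hermite polynomials: `H 0 = 1`, `H 1 = 2X`,
`H (n+2) = 2X * H (n+1) - 2(n+1) * H n`. -/
noncomputable def hermiteH : ℕ → Polynomial ℝ
  | 0 => 1
  | 1 => Polynomial.C 2 * Polynomial.X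
  | (n + 2) => Polynomial.C 2 * Polynomial.X * hermiteH (n + 1)
      - Polynomial.C ((2 * (n + 1) : ℕ) : ℝ) * hermiteH n

/-- `z : Fin m → ℝ` enumerates the zeros of `P` in increasing order. -/
def IsZeroEnum (P : Polynomial ℝ) (m : ℕ) (z : Fin m → ℝ) : Prop :=
  StrictMono z ∧ (∀ i, P.eval (z i) = 0) ∧ (∀ x : ℝ, P.eval x = 0 → ∃ i, x = z i)

/-- The eigenfunction `Φ_n^θ`. -/
noncomputable def Phi (n : ℕ) (θ : ℝ) (p : ℝ × ℝ) : ℝ :=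
  (Real.cos θ * (hermiteH n).eval p.1 + Real.sin θ * (hermiteH n).eval p.2) *
    Real.exp (-(p.1 ^ 2 + p.2 ^ 2) / 2)

/-- A critical zero of `u` : a common zero of `u` and its differential. -/
def IsCriticalZero (u : ℝ × ℝ → ℝ) (p : ℝ × ℝ) : Prop :=
  u p = 0 ∧ fderiv ℝ u p = 0

/-- Nodal set of `u`. -/
def nodalSet (u : ℝ × ℝ → ℝ) : Set (ℝ × ℝ) := {p | u p = 0}

/-- The set of nodal domains of `u`, i.e. of connected components of the
complement of the nodal set. -/
def nodalDomains (u : ℝ × ℝ → ℝ) : Set (Set (ℝ × ℝ)) :=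
  {C | ∃ p, u p ≠ 0 ∧ C = connectedComponentIn {q | u q ≠ 0} p}

/-- `Ψ_n(x,y) = H_n(x) - H_n(y)`. -/
noncomputable def Psi (n : ℕ) (p : ℝ × ℝ) : ℝ :=
  (hermiteH n).eval p.1 - (hermiteH n).eval p.2

lemma hermiteH_add_two (n : ℕ) : hermiteH (n + 2) =
    C 2 * X * hermiteH (n + 1) - C ((2 * (n + 1) : ℕ) : ℝ) * hermiteH n := rfl

lemma derivative_hermiteH_succ (n : ℕ) :
    derivative (hermiteH (n + 1)) = C ((2 * (n + 1) : ℕ) : ℝ) * hermiteH n := by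
  induction n using Nat.twoStepInduction with
  | zero => simp [hermiteH]
  | one =>
    simp only [hermiteH, derivative_sub, derivative_mul, derivative_X, derivative_one,
      map_natCast, map_ofNat]
    push_cast
    simp only [derivative_ofNat]
    ring
  | more k ih₁ ih₂ =>
    rw [hermiteH_add_two (k + 1)]
    simp only [derivative_sub, derivative_mul, derivative_C, derivative_X, ih₁, ih₂]
    rw [hermiteH_add_two k]
    simp only [map_natCast, map_ofNat]
    push_cast
    ring

lemma natDegree_hermiteH_le (n : ℕ) : (hermiteH n).natDegree ≤ n := by
  induction n using Nat.twoStepInduction with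
  | zero => simp [hermiteH]
  | one => simp [hermiteH]
  | more k ih₁ ih₂ =>
    rw [hermiteH_add_two]
    refine (natDegree_sub_le _ _).trans (max_le ?_ ?_)
    · have : (C (2 : ℝ) * X).natDegree ≤ 1 := natDegree_mul_le.trans (by simp)
      exact natDegree_mul_le.trans (by omega)
    · exact (natDegree_C_mul_le _ _).trans (by omega)

lemma coeff_hermiteH_self (n : ℕ) : (hermiteH n).coeff n = 2 ^ n := by
  induction n using Nat.twoStepInduction with
  | zero => simp [hermiteH]
  | one => simp [hermiteH]
  | more k ih₁ ih₂ =>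
    rw [hermiteH_add_two, coeff_sub, mul_assoc, coeff_C_mul, coeff_X_mul, coeff_C_mul, ih₂,
      coeff_eq_zero_of_natDegree_lt ((natDegree_hermiteH_le k).trans_lt (by omega))]
    ring

lemma hermiteH_ne_zero (n : ℕ) : hermiteH n ≠ 0 := fun h =>
  pow_ne_zero n two_ne_zero <| by simpa [h] using (coeff_hermiteH_self n).symm

lemma hermiteH_eval_neg (n : ℕ) (x : ℝ) :
    (hermiteH n).eval (-x) = (-1) ^ n * (hermiteH n).eval x := by
  induction n using Nat.twoStepInduction generalizing x with
  | zero => simp [hermiteH]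
  | one => simp [hermiteH]
  | more k ih₁ ih₂ =>
    simp only [hermiteH_add_two, eval_sub, eval_mul, eval_C, eval_X, ih₁, ih₂]
    ring

lemma sq_hermiteH_eval_neg (n : ℕ) (x : ℝ) :
    (hermiteH n).eval (-x) ^ 2 = (hermiteH n).eval x ^ 2 := by
  rw [hermiteH_eval_neg, mul_pow, ← pow_mul, pow_mul', neg_one_sq, one_pow, one_mul]

lemma hermiteH_eval_succ_ne_zero {n : ℕ} {x : ℝ} (hx : (hermiteH n).eval x = 0) :
    (hermiteH (n + 1)).eval x ≠ 0 := by
  induction n with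
  | zero => simp [hermiteH] at hx
  | succ k ih =>
    intro hx'
    simp only [hermiteH_add_two, eval_sub, eval_mul, eval_C, hx, mul_zero, zero_sub,
      neg_eq_zero] at hx'
    exact ih ((mul_eq_zero.mp hx').resolve_left (by positivity)) hx

lemma derivative_derivative_hermiteH (n : ℕ) :
    derivative (derivative (hermiteH n)) =
      C 2 * X * derivative (hermiteH n) - C ((2 * n : ℕ) : ℝ) * hermiteH n := by
  match n with
  | 0 => simp [hermiteH]
  | 1 => simp [hermiteH]; ring
  | m + 2 =>
    rw [derivative_hermiteH_succ (m + 1), derivative_mul, derivative_C, derivative_hermiteH_succ m,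
      hermiteH_add_two m]
    simp only [map_natCast, map_ofNat]
    push_cast
    ring

lemma Polynomial.strictMonoOn_eval_of_monotoneOn {p : ℝ[X]} {D : Set ℝ} (hD : D.OrdConnected)
    (hp : derivative p ≠ 0) (hmono : MonotoneOn (fun x => p.eval x) D) :
    StrictMonoOn (fun x => p.eval x) D := by
  intro a ha b hb hab
  refine (hmono ha hb hab.le).lt_of_ne fun heq => hp ?_
  have hconst : p = C (p.eval a) := by
    refine eq_of_infinite_eval_eq _ _ ((Icc_infinite hab).mono fun t ht => ?_)
    have hta := hmono ha (hD.out ha hb ht) ht.1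
    have htb := hmono (hD.out ha hb ht) hb ht.2
    simp only [eval_C, mem_ofPred_eq]
    linarith
  rw [hconst, derivative_C]

noncomputable def hermiteEnergy (n : ℕ) : ℝ[X] :=
  C ((2 * n : ℕ) : ℝ) * hermiteH n ^ 2 + derivative (hermiteH n) ^ 2

lemma derivative_hermiteEnergy (n : ℕ) :
    derivative (hermiteEnergy n) = C 4 * X * derivative (hermiteH n) ^ 2 := by
  rw [hermiteEnergy, derivative_add, derivative_mul, derivative_C, derivative_pow,
    derivative_pow, derivative_derivative_hermiteH]
  simp only [map_natCast, map_ofNat]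
  push_cast
  ring

lemma hermiteEnergy_succ_eval_neg (n : ℕ) (x : ℝ) :
    (hermiteEnergy (n + 1)).eval (-x) = (hermiteEnergy (n + 1)).eval x := by
  simp only [hermiteEnergy, derivative_hermiteH_succ, eval_add, eval_mul, eval_pow, eval_C,
    mul_pow, sq_hermiteH_eval_neg]

lemma hermiteEnergy_succ_strictMonoOn (n : ℕ) :
    StrictMonoOn (fun x => (hermiteEnergy (n + 1)).eval x) (Ici 0) := by
  have hderiv : derivative (hermiteEnergy (n + 1)) ≠ 0 := by
    rw [derivative_hermiteEnergy, derivative_hermiteH_succ]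
    refine mul_ne_zero (by simp) (pow_ne_zero 2 (mul_ne_zero ?_ (hermiteH_ne_zero n)))
    exact C_ne_zero.mpr (by positivity)
  refine (hermiteEnergy (n + 1)).strictMonoOn_eval_of_monotoneOn ordConnected_Ici hderiv ?_
  refine monotoneOn_of_deriv_nonneg (convex_Ici 0) (Polynomial.continuousOn _)
    (Polynomial.differentiableOn _) fun x hx => ?_
  rw [interior_Ici, mem_Ioi] at hx
  rw [Polynomial.deriv, derivative_hermiteEnergy]
  simp only [eval_mul, eval_pow, eval_C, eval_X]
  positivity

lemma abs_eq_abs_of_hermiteEnergy_succ_eval_eq {n : ℕ} {x y : ℝ}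
    (h : (hermiteEnergy (n + 1)).eval x = (hermiteEnergy (n + 1)).eval y) : |x| = |y| := by
  have heval_abs :
      ∀ z : ℝ, (hermiteEnergy (n + 1)).eval |z| = (hermiteEnergy (n + 1)).eval z := by
    intro z
    rcases abs_choice z with hz | hz <;> rw [hz]
    exact hermiteEnergy_succ_eval_neg n z
  refine (hermiteEnergy_succ_strictMonoOn n).injOn (abs_nonneg x) (abs_nonneg y) ?_
  simp only [heval_abs, h]

lemma derivative_hermiteH_succ_eval_eq_zero_iff {n : ℕ} {x : ℝ} :
    (derivative (hermiteH (n + 1))).eval x = 0 ↔ (hermiteH n).eval x = 0 := by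
  rw [derivative_hermiteH_succ, eval_mul, eval_C, mul_eq_zero, or_iff_right (by positivity)]

lemma hermiteEnergy_succ_eval_of_hermiteH_eval_eq_zero {n : ℕ} {x : ℝ}
    (hx : (hermiteH n).eval x = 0) :
    (hermiteEnergy (n + 1)).eval x =
      ((2 * (n + 1) : ℕ) : ℝ) * (hermiteH (n + 1)).eval x ^ 2 := by
  simp [hermiteEnergy, derivative_hermiteH_succ_eval_eq_zero_iff.mpr hx]

lemma eq_of_hermiteH_odd_eval_eq {k : ℕ} {x y : ℝ}
    (hx : (hermiteH (2 * k)).eval x = 0) (hy : (hermiteH (2 * k)).eval y = 0)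
    (hxy : (hermiteH (2 * k + 1)).eval x = (hermiteH (2 * k + 1)).eval y) : x = y := by
  have habs : |x| = |y| := abs_eq_abs_of_hermiteEnergy_succ_eval_eq <| by
    rw [hermiteEnergy_succ_eval_of_hermiteH_eval_eq_zero hx,
      hermiteEnergy_succ_eval_of_hermiteH_eval_eq_zero hy, hxy]
  rcases abs_eq_abs.mp habs with h | h
  · exact h
  · have hodd : (hermiteH (2 * k + 1)).eval x = -(hermiteH (2 * k + 1)).eval y := by
      rw [h, hermiteH_eval_neg, Odd.neg_one_pow (odd_two_mul_add_one k), neg_one_mul]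
    exact absurd (by linarith) (hermiteH_eval_succ_ne_zero hy)

lemma hasFDerivAt_Psi (n : ℕ) (p : ℝ × ℝ) :
    HasFDerivAt (Psi n)
      ((derivative (hermiteH n)).eval p.1 • ContinuousLinearMap.fst ℝ ℝ ℝ -
        (derivative (hermiteH n)).eval p.2 • ContinuousLinearMap.snd ℝ ℝ ℝ) p :=
  ((hermiteH n).hasDerivAt p.1 |>.comp_hasFDerivAt p hasFDerivAt_fst).sub
    ((hermiteH n).hasDerivAt p.2 |>.comp_hasFDerivAt p hasFDerivAt_snd)

lemma derivative_hermiteH_eval_eq_zero_of_fderiv_Psi_eq_zero {n : ℕ} {p : ℝ × ℝ}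
    (h : fderiv ℝ (Psi n) p = 0) :
    (derivative (hermiteH n)).eval p.1 = 0 ∧ (derivative (hermiteH n)).eval p.2 = 0 := by
  rw [(hasFDerivAt_Psi n p).fderiv] at h
  have h₁ := congrArg (fun L : ℝ × ℝ →L[ℝ] ℝ => L (1, 0)) h
  have h₂ := congrArg (fun L : ℝ × ℝ →L[ℝ] ℝ => L (0, 1)) h
  simp only [sub_apply, smul_apply, ContinuousLinearMap.coe_fst', ContinuousLinearMap.coe_snd',
    smul_eq_mul, mul_one, mul_zero, sub_zero, zero_apply, zero_sub, neg_eq_zero] at h₁ h₂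
  exact ⟨h₁, h₂⟩

theorem critical_zeros_of_Psi_on_diagonal_general (n : ℕ) (hodd : Odd n) :
    (∀ x y : ℝ, (hermiteH (n - 1)).eval x = 0 → (hermiteH (n - 1)).eval y = 0 →
      (hermiteH n).eval x = (hermiteH n).eval y → x = y) ∧
    (∀ p : ℝ × ℝ, (Psi n p = 0 ∧ fderiv ℝ (Psi n) p = 0) → p.1 = p.2) := by
  obtain ⟨k, rfl⟩ := hodd
  rw [Nat.add_sub_cancel]
  refine ⟨fun x y => eq_of_hermiteH_odd_eval_eq, ?_⟩
  rintro p ⟨hzero, hcrit⟩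
  obtain ⟨h₁, h₂⟩ := derivative_hermiteH_eval_eq_zero_of_fderiv_Psi_eq_zero hcrit
  exact eq_of_hermiteH_odd_eval_eq (derivative_hermiteH_succ_eval_eq_zero_iff.mp h₁)
    (derivative_hermiteH_succ_eval_eq_zero_iff.mp h₂) (sub_eq_zero.mp hzero)

/-- For odd `n ≥ 3`: if `H_{n-1}(x) = H_{n-1}(y) = 0` and
`H_n(x) = H_n(y)`, then `x = y`; consequently, every critical zero of `Ψ_n`
lies on the diagonal. -/
theorem critical_zeros_of_Psi_on_diagonal (n : ℕ) (hn3 : 3 ≤ n) (hodd : Odd n) :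
    (∀ x y : ℝ, (hermiteH (n - 1)).eval x = 0 → (hermiteH (n - 1)).eval y = 0 →
      (hermiteH n).eval x = (hermiteH n).eval y → x = y) ∧
    (∀ p : ℝ × ℝ, (Psi n p = 0 ∧ fderiv ℝ (Psi n) p = 0) → p.1 = p.2) :=
  critical_zeros_of_Psi_on_diagonal_general n hodd
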